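/- Let B₁, B₂ ∈ ℝ^{k×d} have orthonormal rows and let T ⊆ ℝ^d be a subspace with dim T ≥ k. Then for every k×k orthogonal matrix U: |cangle(rowspace(B₁), T) − cangle(rowspace(B₂), T)| ≤ ‖U B₁ − B₂‖₂. Consequently, |cangle(rowspace(B₁), T) − cangle(rowspace(B₂), T)| ≤ d(B₁, B₂), where d(B₁, B₂) := inf{‖U B₁ − B₂‖₂ : U ∈ ℝ^{k×k} orthogonal}. -/

import Mathlib

open Matrix Filter

noncomputable section

/-- View a plain vector as an element of Euclidean space. -/
def toE {n : ℕ} (x : Fin n → ℝ) : EuclideanSpace ℝ (Fin n) := WithLp.toLp 2 x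

/-- Euclidean (ℓ2) norm of a vector. -/
def enorm2 {n : ℕ} (x : Fin n → ℝ) : ℝ := ‖toE x‖

/-- Spectral (ℓ2 operator) norm of a matrix. -/
def specNorm {m n : ℕ} (M : Matrix (Fin m) (Fin n) ℝ) : ℝ :=
  sSup {c | ∃ x : Fin n → ℝ, enorm2 x = 1 ∧ c = enorm2 (M.mulVec x)}

/-- Row space of a matrix, as a subspace of Euclidean space. -/
def rowspace {k d : ℕ} (B : Matrix (Fin k) (Fin d) ℝ) :
    Submodule ℝ (EuclideanSpace ℝ (Fin d)) :=
  Submodule.span ℝ (Set.range fun i => toE (B i))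

/-- Cosine of the largest principal angle between subspaces `R` and `T` of `ℝ^d`. -/
def cangle {d : ℕ} (R T : Submodule ℝ (EuclideanSpace ℝ (Fin d))) : ℝ :=
  sInf {c | ∃ r ∈ R, ‖r‖ = 1 ∧ c = ‖(T.orthogonalProjectionOnto r : EuclideanSpace ℝ (Fin d))‖}

/-- Feature-extractor distance: `d(B₁, B₂) = inf {‖U B₁ − B₂‖₂ : U orthogonal}`. -/
def fdist {k d : ℕ} (B₁ B₂ : Matrix (Fin k) (Fin d) ℝ) : ℝ :=
  sInf {c | ∃ U : Matrix (Fin k) (Fin k) ℝ, Uᵀ * U = 1 ∧ c = specNorm (U * B₁ - B₂)}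

/-!
If `B` has orthonormal rows, `c ↦ Bᵀ c` is an isometry of `ℝ^k` onto `rowspace B`, so
`cangle (rowspace B) T` is the infimum of `c ↦ ‖Π_T (Bᵀ c)‖` over the unit sphere of `ℝ^k`.
Since `Π_T` is 1-Lipschitz, these functions for `A` and `B` differ pointwise by at most
`‖(A - B)ᵀ c‖ ≤ ‖A - B‖₂`, hence so do their infima. An orthogonal `U` does not change the row
space, so taking `A = U B₁` gives the bound for every `U`, and then for their infimum `d(B₁, B₂)`.
-/

open Metric

section

variable {α : Type*} {S : Set α} {f g : α → ℝ} {ε : ℝ}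

lemma sInf_image_le_sInf_image_add (hf : BddBelow (f '' S)) (hε : 0 ≤ ε)
    (h : ∀ x ∈ S, f x ≤ g x + ε) : sInf (f '' S) ≤ sInf (g '' S) + ε := by
  rcases S.eq_empty_or_nonempty with rfl | hS
  · simpa using hε -- both infima are the junk value `sInf ∅ = 0`
  have : sInf (f '' S) - ε ≤ sInf (g '' S) := by
    refine le_csInf (hS.image g) ?_
    rintro _ ⟨x, hx, rfl⟩
    linarith [csInf_le hf (Set.mem_image_of_mem f hx), h x hx]
  linarith

lemma abs_sInf_image_sub_sInf_image_le (hf : BddBelow (f '' S)) (hg : BddBelow (g '' S))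
    (hε : 0 ≤ ε) (h : ∀ x ∈ S, |f x - g x| ≤ ε) : |sInf (f '' S) - sInf (g '' S)| ≤ ε := by
  rw [abs_sub_le_iff]
  constructor
  · linarith [sInf_image_le_sInf_image_add (g := g) hf hε fun x hx =>
      by linarith [(abs_le.mp (h x hx)).2]]
  · linarith [sInf_image_le_sInf_image_add (g := f) hg hε fun x hx =>
      by linarith [(abs_le.mp (h x hx)).1]]

end

section

open scoped Matrix.Norms.L2Operator

lemma specNorm_eq_l2_opNorm {m n : ℕ} (M : Matrix (Fin m) (Fin n) ℝ) : specNorm M = ‖M‖ := by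
  rw [l2_opNorm_def, ← ContinuousLinearMap.sSup_sphere_eq_norm]
  refine congrArg sSup (Set.ext fun c => ?_)
  constructor
  · rintro ⟨x, hx, rfl⟩
    exact ⟨toE x, mem_sphere_zero_iff_norm.mpr hx, rfl⟩
  · rintro ⟨x, hx, rfl⟩
    exact ⟨WithLp.ofLp x, mem_sphere_zero_iff_norm.mp hx, rfl⟩

lemma specNorm_nonneg {m n : ℕ} (M : Matrix (Fin m) (Fin n) ℝ) : 0 ≤ specNorm M :=
  specNorm_eq_l2_opNorm M ▸ norm_nonneg M

lemma norm_toEuclideanLin_transpose_le {m n : ℕ} (M : Matrix (Fin m) (Fin n) ℝ)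
    (x : EuclideanSpace ℝ (Fin m)) : ‖toEuclideanLin Mᵀ x‖ ≤ specNorm M * ‖x‖ := by
  rw [specNorm_eq_l2_opNorm, ← l2_opNorm_conjTranspose, conjTranspose_eq_transpose_of_trivial]
  exact ((toEuclideanLin.trans LinearMap.toContinuousLinearMap) Mᵀ).le_opNorm x

end

lemma norm_toEuclideanLin_transpose {k d : ℕ} {B : Matrix (Fin k) (Fin d) ℝ} (hB : B * Bᵀ = 1)
    (x : EuclideanSpace ℝ (Fin k)) : ‖toEuclideanLin Bᵀ x‖ = ‖x‖ := by
  have hsq : ‖toEuclideanLin Bᵀ x‖ ^ 2 = ‖x‖ ^ 2 := by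
    rw [← real_inner_self_eq_norm_sq, ← real_inner_self_eq_norm_sq]
    simp only [EuclideanSpace.inner_eq_star_dotProduct, toLpLin_apply, star_trivial]
    rw [dotProduct_mulVec, mulVec_transpose, vecMul_vecMul, hB, vecMul_one]
  exact (sq_eq_sq₀ (norm_nonneg _) (norm_nonneg _)).mp hsq

lemma toEuclideanLin_transpose_apply {k d : ℕ} (B : Matrix (Fin k) (Fin d) ℝ)
    (c : EuclideanSpace ℝ (Fin k)) : toEuclideanLin Bᵀ c = ∑ i, c i • toE (B i) := by
  rw [toLpLin_apply, mulVec_transpose, vecMul_eq_sum, WithLp.toLp_sum]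
  rfl

lemma rowspace_eq_range {k d : ℕ} (B : Matrix (Fin k) (Fin d) ℝ) :
    rowspace B = LinearMap.range (toEuclideanLin Bᵀ) := by
  ext r
  simp only [rowspace, Submodule.mem_span_range_iff_exists_fun, LinearMap.mem_range,
    toEuclideanLin_transpose_apply]
  exact ⟨fun ⟨c, hc⟩ => ⟨WithLp.toLp 2 c, hc⟩, fun ⟨c, hc⟩ => ⟨c, hc⟩⟩

lemma rowspace_mul_of_mul_eq_one {m k d : ℕ} {U : Matrix (Fin m) (Fin k) ℝ}
    {V : Matrix (Fin k) (Fin m) ℝ} (hVU : V * U = 1) (B : Matrix (Fin k) (Fin d) ℝ) :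
    rowspace (U * B) = rowspace B := by
  have hsurj : LinearMap.range (toEuclideanLin Uᵀ) = ⊤ := by
    refine LinearMap.range_eq_top.mpr fun x => ⟨toEuclideanLin Vᵀ x, ?_⟩
    rw [← LinearMap.comp_apply, ← toLpLin_mul_same, ← transpose_mul, hVU, transpose_one,
      toLpLin_one, LinearMap.id_apply]
  rw [rowspace_eq_range, rowspace_eq_range, transpose_mul, toLpLin_mul_same,
    LinearMap.range_comp_of_range_eq_top _ hsurj]

lemma cangle_range_eq {E : Type*} [NormedAddCommGroup E] [NormedSpace ℝ E] {d : ℕ}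
    (V : E →ₗᵢ[ℝ] EuclideanSpace ℝ (Fin d)) (T : Submodule ℝ (EuclideanSpace ℝ (Fin d))) :
    cangle (LinearMap.range V.toLinearMap) T =
      sInf ((fun x => ‖(T.orthogonalProjectionOnto (V x) : EuclideanSpace ℝ (Fin d))‖) ''
        sphere 0 1) := by
  refine congrArg sInf (Set.ext fun c => ⟨?_, ?_⟩)
  · rintro ⟨_, ⟨x, rfl⟩, hx, rfl⟩
    exact ⟨x, mem_sphere_zero_iff_norm.mpr (by simpa using hx), rfl⟩
  · rintro ⟨x, hx, rfl⟩
    exact ⟨V x, ⟨x, rfl⟩, by simpa using hx, rfl⟩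

lemma cangle_rowspace_eq {k d : ℕ} {B : Matrix (Fin k) (Fin d) ℝ} (hB : B * Bᵀ = 1)
    (T : Submodule ℝ (EuclideanSpace ℝ (Fin d))) :
    cangle (rowspace B) T =
      sInf ((fun c => ‖(T.orthogonalProjectionOnto (toEuclideanLin Bᵀ c) :
        EuclideanSpace ℝ (Fin d))‖) '' sphere 0 1) := by
  rw [rowspace_eq_range]
  exact cangle_range_eq ⟨toEuclideanLin Bᵀ, norm_toEuclideanLin_transpose hB⟩ T

lemma abs_cangle_rowspace_sub_le {k d : ℕ} {A B : Matrix (Fin k) (Fin d) ℝ}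
    (hA : A * Aᵀ = 1) (hB : B * Bᵀ = 1) (T : Submodule ℝ (EuclideanSpace ℝ (Fin d))) :
    |cangle (rowspace A) T - cangle (rowspace B) T| ≤ specNorm (A - B) := by
  have hbdd : ∀ M : Matrix (Fin k) (Fin d) ℝ, BddBelow ((fun c =>
      ‖(T.orthogonalProjectionOnto (toEuclideanLin Mᵀ c) : EuclideanSpace ℝ (Fin d))‖) ''
        sphere 0 1) :=
    fun M => ⟨0, by rintro _ ⟨c, -, rfl⟩; exact norm_nonneg _⟩
  rw [cangle_rowspace_eq hA, cangle_rowspace_eq hB]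
  refine abs_sInf_image_sub_sInf_image_le (hbdd A) (hbdd B) (specNorm_nonneg _) fun c hc => ?_
  calc _ ≤ ‖T.orthogonalProjectionOnto (toEuclideanLin Aᵀ c) -
          T.orthogonalProjectionOnto (toEuclideanLin Bᵀ c)‖ := abs_norm_sub_norm_le _ _
    _ ≤ ‖toEuclideanLin (A - B)ᵀ c‖ := by
      rw [transpose_sub, map_sub toEuclideanLin, LinearMap.sub_apply, ← map_sub]
      exact T.norm_orthogonalProjectionOnto_apply_le _
    _ ≤ specNorm (A - B) := by
      simpa [mem_sphere_zero_iff_norm.mp hc] using norm_toEuclideanLin_transpose_le (A - B) c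

theorem stmt_8_general {k d : ℕ} (B₁ B₂ : Matrix (Fin k) (Fin d) ℝ)
    (h₁ : B₁ * B₁ᵀ = 1) (h₂ : B₂ * B₂ᵀ = 1)
    (T : Submodule ℝ (EuclideanSpace ℝ (Fin d))) :
    (∀ U : Matrix (Fin k) (Fin k) ℝ, Uᵀ * U = 1 →
      |cangle (rowspace B₁) T - cangle (rowspace B₂) T| ≤ specNorm (U * B₁ - B₂)) ∧
    |cangle (rowspace B₁) T - cangle (rowspace B₂) T| ≤ fdist B₁ B₂ := by
  have hbound : ∀ U : Matrix (Fin k) (Fin k) ℝ, Uᵀ * U = 1 →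
      |cangle (rowspace B₁) T - cangle (rowspace B₂) T| ≤ specNorm (U * B₁ - B₂) := by
    intro U hU
    have hUB₁ : (U * B₁) * (U * B₁)ᵀ = 1 := by
      rw [transpose_mul, Matrix.mul_assoc, ← Matrix.mul_assoc B₁, h₁, Matrix.one_mul,
        mul_eq_one_comm.mp hU]
    simpa only [rowspace_mul_of_mul_eq_one hU] using abs_cangle_rowspace_sub_le hUB₁ h₂ T
  refine ⟨hbound, le_csInf ⟨_, 1, by simp, rfl⟩ ?_⟩
  rintro _ ⟨U, hU, rfl⟩
  exact hbound U hU

/-- the principal angle between row spaces and a fixed subspace `T` is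
Lipschitz in the feature extractor: for every orthogonal `U`,
`|cangle(rowspace B₁, T) − cangle(rowspace B₂, T)| ≤ ‖U B₁ − B₂‖₂`, hence the difference
is at most the feature-extractor distance `d(B₁, B₂)`. -/
theorem stmt_8 {k d : ℕ} (B₁ B₂ : Matrix (Fin k) (Fin d) ℝ)
    (h₁ : B₁ * B₁ᵀ = 1) (h₂ : B₂ * B₂ᵀ = 1)
    (T : Submodule ℝ (EuclideanSpace ℝ (Fin d)))
    (hT : k ≤ Module.finrank ℝ T) :
    (∀ U : Matrix (Fin k) (Fin k) ℝ, Uᵀ * U = 1 →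
      |cangle (rowspace B₁) T - cangle (rowspace B₂) T| ≤ specNorm (U * B₁ - B₂)) ∧
    |cangle (rowspace B₁) T - cangle (rowspace B₂) T| ≤ fdist B₁ B₂ :=
  stmt_8_general B₁ B₂ h₁ h₂ T

end
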